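/- arXiv:2307.15612 — 5 statements merged into one kernel-verified Lean document; each statement's English description precedes it below -/
import Mathlib

section
/- Let S be a finite set and let f : 2^S → 2^S be a monotone bijection (with respect to set inclusion). Then for every subset T of S, the cardinality of f(T) equals the cardinality of T. -/
theorem card_le_card_f {α : Type*} [Fintype α] [DecidableEq α]
    (f : Finset α → Finset α)
    (hmono : ∀ X Y : Finset α, X ⊆ Y → f X ⊆ f Y)
    (hinj : Function.Injective f) :
    ∀ T : Finset α, T.card ≤ (f T).card := by
  intro T
  induction T using Finset.strongInduction with
  | _ T ih =>
    rcases T.eq_empty_or_nonempty with rfl | ⟨x, hx⟩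
    · simp
    · have hss : T.erase x ⊂ T := Finset.erase_ssubset hx
      have h1 : f (T.erase x) ⊂ f T := by
        refine ⟨hmono _ _ hss.subset, fun h => ?_⟩
        have : f T = f (T.erase x) := le_antisymm h (hmono _ _ hss.subset)
        exact hss.ne (hinj this).symm
      have h2 := ih _ hss
      have h3 : (f (T.erase x)).card < (f T).card := Finset.card_lt_card h1
      have := Finset.card_erase_of_mem hx
      omega

theorem stmt_0 {α : Type*} [Fintype α] [DecidableEq α]
    (f : Finset α → Finset α)
    (hmono : ∀ X Y : Finset α, X ⊆ Y → f X ⊆ f Y)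
    (hbij : Function.Bijective f) :
    ∀ T : Finset α, (f T).card = T.card := by
  have hle := card_le_card_f f hmono hbij.injective
  have hsum : ∑ X : Finset α, (f X).card = ∑ X : Finset α, X.card :=
    Fintype.sum_bijective f hbij _ _ (fun _ => rfl)
  have := (Finset.sum_eq_sum_iff_of_le (s := Finset.univ)
    (f := fun X : Finset α => X.card) (g := fun X => (f X).card)
    (fun i _ => hle i)).mp hsum.symm
  intro T
  exact (this T (Finset.mem_univ T)).symm
end

section
/- Let S be a finite set and let f : 2^S → 2^S be a monotone bijection. Then for every subset T of S, f(T) = ⋃_{x ∈ T} f({x}). In particular, f is completely determined by its values on singletons. -/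
theorem stmt_1 {α : Type*} [Fintype α] [DecidableEq α]
    (f : Finset α → Finset α)
    (hmono : ∀ X Y : Finset α, X ⊆ Y → f X ⊆ f Y)
    (hbij : Function.Bijective f) :
    ∀ T : Finset α, f T = T.biUnion (fun x => f {x}) := by
  set e : Equiv.Perm (Finset α) := Equiv.ofBijective f hbij with he
  have hef : ∀ Z, e Z = f Z := fun Z => rfl
  have hpow : ∀ n : ℕ, ∀ X Y : Finset α, X ⊆ Y → (e ^ n) X ⊆ (e ^ n) Y := by
    intro n
    induction n with
    | zero => intro X Y h; simpa using h
    | succ k ih =>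
      intro X Y h
      have h1 : (e ^ (k + 1)) X = (e ^ k) (e X) := by
        rw [pow_succ]; rfl
      have h2 : (e ^ (k + 1)) Y = (e ^ k) (e Y) := by
        rw [pow_succ]; rfl
      rw [h1, h2, hef, hef]
      exact ih _ _ (hmono X Y h)
  have hreflect : ∀ X Y : Finset α, f X ⊆ f Y → X ⊆ Y := by
    intro X Y h
    have hn : 0 < orderOf e := orderOf_pos e
    have key : ∀ Z : Finset α, (e ^ (orderOf e - 1)) (f Z) = Z := by
      intro Z
      have : (e ^ (orderOf e - 1)) (e Z) = (e ^ (orderOf e - 1) * e) Z := rfl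
      rw [← hef, this, ← pow_succ, Nat.sub_add_cancel hn, pow_orderOf_eq_one]
      rfl
    have := hpow (orderOf e - 1) _ _ h
    rwa [key X, key Y] at this
  intro T
  apply Finset.Subset.antisymm
  · -- f T ⊆ biUnion
    obtain ⟨W, hW⟩ := hbij.2 (T.biUnion (fun x => f {x}))
    rw [← hW]
    apply hmono
    intro x hx
    have hsub : f {x} ⊆ f W := by
      rw [hW]
      exact Finset.subset_biUnion_of_mem (fun x => f {x}) hx
    have : ({x} : Finset α) ⊆ W := hreflect _ _ hsub
    exact this (Finset.mem_singleton_self x)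
  · intro y hy
    rw [Finset.mem_biUnion] at hy
    obtain ⟨x, hx, hyx⟩ := hy
    exact hmono {x} T (Finset.singleton_subset_iff.2 hx) hyx
end

section
/- Let A and B be finite sets of inhibitorless reactions over the same finite background set S, and suppose that for every reaction a ∈ A it holds res_A(R_a) ⊆ res_B(R_a). Then res_A(T) ⊆ res_B(T) for all states T ⊆ S. -/
/-- The result function of a set of inhibitorless reactions `(R, P)`. -/
def resI {α : Type*} [DecidableEq α]
    (A : Finset (Finset α × Finset α)) (T : Finset α) : Finset α :=
  A.biUnion (fun a => if a.1 ⊆ T then a.2 else ∅)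

lemma resI_mono {α : Type*} [DecidableEq α]
    (A : Finset (Finset α × Finset α)) {T U : Finset α} (hTU : T ⊆ U) :
    resI A T ⊆ resI A U := by
  intro x hx
  simp only [resI, Finset.mem_biUnion] at hx ⊢
  obtain ⟨a, ha, hx⟩ := hx
  refine ⟨a, ha, ?_⟩
  split_ifs at hx with hc
  · rw [if_pos (hc.trans hTU)]; exact hx
  · simp at hx

theorem stmt_10 {α : Type*} [Fintype α] [DecidableEq α]
    (A B : Finset (Finset α × Finset α))
    (h : ∀ a ∈ A, resI A a.1 ⊆ resI B a.1) :
    ∀ T : Finset α, resI A T ⊆ resI B T := by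
  intro T x hx
  simp only [resI, Finset.mem_biUnion] at hx
  obtain ⟨a, ha, hxa⟩ := hx
  by_cases hsub : a.1 ⊆ T
  · rw [if_pos hsub] at hxa
    have hxA : x ∈ resI A a.1 := by
      simp only [resI, Finset.mem_biUnion]
      exact ⟨a, ha, by rw [if_pos (Finset.Subset.refl _)]; exact hxa⟩
    exact resI_mono B hsub (h a ha hxA)
  · rw [if_neg hsub] at hxa; simp at hxa
end

section
/- Let A and B be finite sets of reactantless reactions over the same finite background set S, and suppose that for every reaction a ∈ A it holds res_A(S \ I_a) ⊆ res_B(S \ I_a). Then res_A(T) ⊆ res_B(T) for all states T ⊆ S. -/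
/-- The result function of a set of reactantless reactions `(I, P)`. -/
def resR {α : Type*} [DecidableEq α]
    (A : Finset (Finset α × Finset α)) (T : Finset α) : Finset α :=
  A.biUnion (fun a => if a.1 ∩ T = ∅ then a.2 else ∅)

lemma mem_resR {α : Type*} [DecidableEq α]
    (A : Finset (Finset α × Finset α)) (T : Finset α) (x : α) :
    x ∈ resR A T ↔ ∃ a ∈ A, a.1 ∩ T = ∅ ∧ x ∈ a.2 := by
  simp only [resR, Finset.mem_biUnion]
  constructor
  · rintro ⟨a, ha, hx⟩
    by_cases hc : a.1 ∩ T = ∅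
    · exact ⟨a, ha, hc, by simpa [hc] using hx⟩
    · simp [hc] at hx
  · rintro ⟨a, ha, hc, hx⟩
    exact ⟨a, ha, by simpa [hc] using hx⟩

theorem stmt_11 {α : Type*} [Fintype α] [DecidableEq α]
    (A B : Finset (Finset α × Finset α))
    (h : ∀ a ∈ A, resR A a.1ᶜ ⊆ resR B a.1ᶜ) :
    ∀ T : Finset α, resR A T ⊆ resR B T := by
  intro T x hx
  rw [mem_resR] at hx
  obtain ⟨a, haA, hdisj, hxa⟩ := hx
  have hxA : x ∈ resR A a.1ᶜ := by
    rw [mem_resR]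
    exact ⟨a, haA, by simp, hxa⟩
  have hxB := h a haA hxA
  rw [mem_resR] at hxB ⊢
  obtain ⟨b, hbB, hb1, hxb⟩ := hxB
  refine ⟨b, hbB, ?_, hxb⟩
  have hsub : b.1 ⊆ a.1 := by
    intro y hy
    by_contra hya
    have : y ∈ b.1 ∩ a.1ᶜ := Finset.mem_inter.2 ⟨hy, Finset.mem_compl.2 hya⟩
    simp [hb1] at this
  rw [Finset.eq_empty_iff_forall_notMem] at hdisj ⊢
  intro y hy
  have := Finset.mem_inter.1 hy
  exact hdisj y (Finset.mem_inter.2 ⟨hsub this.1, this.2⟩)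
end

section
/- Let S be a finite set and f : 2^S → 2^S monotone and injective. Then f is additive, i.e., f(X ∪ Y) = f(X) ∪ f(Y) for all X, Y ⊆ S. -/
theorem stmt_17 {α : Type*} [Fintype α] [DecidableEq α]
    (f : Finset α → Finset α)
    (hmono : ∀ X Y : Finset α, X ⊆ Y → f X ⊆ f Y)
    (hinj : Function.Injective f) :
    ∀ X Y : Finset α, f (X ∪ Y) = f X ∪ f Y := by
  have hbij : Function.Bijective f := Finite.injective_iff_bijective.mp hinj
  set e := Equiv.ofBijective f hbij with he
  have hmono' : Monotone f := fun X Y h => hmono X Y h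
  have hinv : Monotone e.symm := by
    set P : Set (Finset α × Finset α) := {p | p.1 ≤ p.2} with hPdef
    have hP : P.Finite := Set.toFinite _
    have hmaps : Set.MapsTo (Prod.map f f) P P := fun p hp => hmono' hp
    have hinjP : Set.InjOn (Prod.map f f) P := fun a _ b _ h =>
      Prod.map_injective.mpr ⟨hinj, hinj⟩ h
    have hsurj : Set.SurjOn (Prod.map f f) P P :=
      ((hP.injOn_iff_bijOn_of_mapsTo hmaps).mp hinjP).surjOn
    intro X Y h
    obtain ⟨p, hp, hpe⟩ := hsurj (show (X, Y) ∈ P from h)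
    have h1 : f p.1 = X := congrArg Prod.fst hpe
    have h2 : f p.2 = Y := congrArg Prod.snd hpe
    have e1 : e.symm X = p.1 := by
      apply e.injective; simp [he, Equiv.ofBijective_apply, h1]
    have e2 : e.symm Y = p.2 := by
      apply e.injective; simp [he, Equiv.ofBijective_apply, h2]
    rw [e1, e2]; exact hp
  intro X Y
  exact (e.toOrderIso hmono' hinv).map_sup X Y
end
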